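/- A stellar weld is inverse to a stellar subdivision: if K = A ⋆ lk(A,K) + Q(A,K) and a is a vertex not occurring in K, then applying the weld (A a)⁻¹ to the subdivision (A a)K = a ⋆ ∂A ⋆ lk(A,K) + Q(A,K) recovers K. -/
import Mathlib


open Finset

/-- A `Chain` is a formal `ℤ/2`-sum of simplexes (finite sets of integer vertices). -/
abbrev Chain : Type := (Finset ℕ) →₀ ZMod 2

/-- Boundary of a single simplex: the sum of its codimension-1 faces. -/
noncomputable def sbnd (s : Finset ℕ) : Chain :=
  ∑ i ∈ s, Finsupp.single (s.erase i) 1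

/-- The `ℤ/2` boundary operator, extended linearly to chains. -/
noncomputable def bnd (C : Chain) : Chain :=
  C.sum fun s c => c • sbnd s

/-- Join of chains, defined bilinearly by union of vertex sets on simplexes. -/
noncomputable def joinC (K L : Chain) : Chain :=
  K.sum fun A a => L.sum fun B b => Finsupp.single (A ∪ B) (a * b)

/-- The link `lk(A,K)`. -/
noncomputable def lkC (A : Finset ℕ) (K : Chain) : Chain :=
  K.sum fun g c => if A ⊆ g then Finsupp.single (g \ A) c else 0

/-- `Q(A,K)`: the sum of generators of `K` not containing `A`. -/
noncomputable def QC (A : Finset ℕ) (K : Chain) : Chain :=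
  K.sum fun g c => if A ⊆ g then 0 else Finsupp.single g c

/-- Stellar subdivision `(A a)K = a ⋆ ∂A ⋆ lk(A,K) + Q(A,K)`. -/
noncomputable def subdivC (A : Finset ℕ) (a : ℕ) (K : Chain) : Chain :=
  joinC (Finsupp.single {a} 1) (joinC (sbnd A) (lkC A K)) + QC A K

/-- Stellar weld `(A a)⁻¹ K = A ⋆ B + Q(a,K)` (for `lk(a,K) = ∂A ⋆ B`). -/
noncomputable def weldC (A : Finset ℕ) (a : ℕ) (B K : Chain) : Chain :=
  joinC (Finsupp.single A 1) B + QC {a} K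

/-- Relabeling of vertices by a map `f`. -/
noncomputable def renameC (f : ℕ → ℕ) (K : Chain) : Chain :=
  K.sum fun g c => Finsupp.single (g.image f) c

/-- The set of vertices of a chain. -/
def vertsC (K : Chain) : Finset ℕ := K.support.sup id

/-- A stellar move: a subdivision, a weld, or a bijective relabeling of vertices. -/
inductive StellarMove : Chain → Chain → Prop
  | subdiv (A : Finset ℕ) (a : ℕ) (K : Chain)
      (hA : ∃ g ∈ K.support, A ⊆ g) (hA' : A.Nonempty)
      (ha : ∀ g ∈ K.support, a ∉ g) :
      StellarMove K (subdivC A a K)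
  | weld (A : Finset ℕ) (a : ℕ) (B K : Chain)
      (hlk : lkC {a} K = joinC (sbnd A) B)
      (hA : ∀ g ∈ K.support, ¬ A ⊆ g) (hA' : A.Nonempty) :
      StellarMove K (weldC A a B K)
  | relabel (f : ℕ → ℕ) (hf : Function.Bijective f) (K : Chain) :
      StellarMove K (renameC f K)

/-- Stellar equivalence: a finite sequence of stellar moves. -/
def StellarEquiv : Chain → Chain → Prop := Relation.ReflTransGen StellarMove

/-! ### Auxiliary lemmas -/

lemma chain_eq_sum (C : Chain) : C = ∑ g ∈ C.support, Finsupp.single g (C g) := by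
  conv_lhs => rw [← Finsupp.sum_single C]
  rfl

lemma joinC_single_left (A : Finset ℕ) (L : Chain) :
    joinC (Finsupp.single A 1) L = L.sum fun B b => Finsupp.single (A ∪ B) b := by
  unfold joinC
  rw [Finsupp.sum_single_index]
  · simp
  · simp [Finsupp.sum]

lemma lkC_single (A g : Finset ℕ) (c : ZMod 2) :
    lkC A (Finsupp.single g c) = if A ⊆ g then Finsupp.single (g \ A) c else 0 := by
  unfold lkC
  exact Finsupp.sum_single_index (by split <;> simp)

lemma QC_single (A g : Finset ℕ) (c : ZMod 2) :
    QC A (Finsupp.single g c) = if A ⊆ g then 0 else Finsupp.single g c := by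
  unfold QC
  exact Finsupp.sum_single_index (by split <;> simp)

lemma joinC_single_single (A B : Finset ℕ) (b : ZMod 2) :
    joinC (Finsupp.single A 1) (Finsupp.single B b) = Finsupp.single (A ∪ B) b := by
  rw [joinC_single_left]
  exact Finsupp.sum_single_index (by simp)

noncomputable def lkH (A : Finset ℕ) : Chain →+ Chain where
  toFun := lkC A
  map_zero' := by simp [lkC]
  map_add' := fun C D => by
    show lkC A (C + D) = lkC A C + lkC A D
    unfold lkC
    refine Finsupp.sum_add_index' ?_ ?_
    · intro g; split <;> simp
    · intro g b₁ b₂; split <;> simp [Finsupp.single_add]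

noncomputable def QH (A : Finset ℕ) : Chain →+ Chain where
  toFun := QC A
  map_zero' := by simp [QC]
  map_add' := fun C D => by
    show QC A (C + D) = QC A C + QC A D
    unfold QC
    refine Finsupp.sum_add_index' ?_ ?_
    · intro g; split <;> simp
    · intro g b₁ b₂; split <;> simp [Finsupp.single_add]

noncomputable def joinA (A : Finset ℕ) : Chain →+ Chain where
  toFun L := joinC (Finsupp.single A 1) L
  map_zero' := by
    show joinC (Finsupp.single A 1) 0 = 0
    rw [joinC_single_left]; simp [Finsupp.sum]
  map_add' := fun C D => by
    show joinC (Finsupp.single A 1) (C + D) =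
      joinC (Finsupp.single A 1) C + joinC (Finsupp.single A 1) D
    rw [joinC_single_left, joinC_single_left, joinC_single_left]
    refine Finsupp.sum_add_index' ?_ ?_
    · intro g; simp
    · intro g b₁ b₂; simp [Finsupp.single_add]

lemma lkC_add (A : Finset ℕ) (C D : Chain) :
    lkC A (C + D) = lkC A C + lkC A D := (lkH A).map_add C D

lemma QC_add (A : Finset ℕ) (C D : Chain) :
    QC A (C + D) = QC A C + QC A D := (QH A).map_add C D

lemma lkC_finset_sum {ι : Type*} (A : Finset ℕ) (s : Finset ι) (f : ι → Chain) :
    lkC A (∑ i ∈ s, f i) = ∑ i ∈ s, lkC A (f i) := map_sum (lkH A) f s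

lemma QC_finset_sum {ι : Type*} (A : Finset ℕ) (s : Finset ι) (f : ι → Chain) :
    QC A (∑ i ∈ s, f i) = ∑ i ∈ s, QC A (f i) := map_sum (QH A) f s

lemma joinC_single_finset_sum {ι : Type*} (A : Finset ℕ) (s : Finset ι) (f : ι → Chain) :
    joinC (Finsupp.single A 1) (∑ i ∈ s, f i) =
      ∑ i ∈ s, joinC (Finsupp.single A 1) (f i) := map_sum (joinA A) f s

lemma lkC_sum_support (A : Finset ℕ) (C : Chain) :
    lkC A C = ∑ g ∈ C.support, lkC A (Finsupp.single g (C g)) := by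
  conv_lhs => rw [chain_eq_sum C]
  exact lkC_finset_sum A _ _

lemma QC_sum_support (A : Finset ℕ) (C : Chain) :
    QC A C = ∑ g ∈ C.support, QC A (Finsupp.single g (C g)) := by
  conv_lhs => rw [chain_eq_sum C]
  exact QC_finset_sum A _ _

/-- Vertices of a join avoid `a` if both factors avoid `a`. -/
lemma joinC_notmem {C D : Chain} {a : ℕ} (hC : ∀ g ∈ C.support, a ∉ g)
    (hD : ∀ g ∈ D.support, a ∉ g) : ∀ s ∈ (joinC C D).support, a ∉ s := by
  intro s hs
  unfold joinC at hs
  obtain ⟨g, hg, hs⟩ := Finset.mem_biUnion.1 (Finsupp.support_sum hs)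
  obtain ⟨h, hh, hs⟩ := Finset.mem_biUnion.1 (Finsupp.support_sum hs)
  have := Finsupp.support_single_subset hs
  rw [Finset.mem_singleton] at this
  subst this
  simp only [Finset.mem_union]
  rintro (h1 | h1)
  · exact hC g hg h1
  · exact hD h hh h1

lemma lkC_notmem {A : Finset ℕ} {K : Chain} {a : ℕ} (h : ∀ g ∈ K.support, a ∉ g) :
    ∀ s ∈ (lkC A K).support, a ∉ s := by
  intro s hs
  unfold lkC at hs
  obtain ⟨g, hg, hs⟩ := Finset.mem_biUnion.1 (Finsupp.support_sum hs)
  split at hs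
  · have := Finsupp.support_single_subset hs
    rw [Finset.mem_singleton] at this
    subst this
    intro hmem
    exact h g hg (Finset.mem_sdiff.1 hmem).1
  · simp at hs

lemma QC_notmem {A : Finset ℕ} {K : Chain} {a : ℕ} (h : ∀ g ∈ K.support, a ∉ g) :
    ∀ s ∈ (QC A K).support, a ∉ s := by
  intro s hs
  unfold QC at hs
  obtain ⟨g, hg, hs⟩ := Finset.mem_biUnion.1 (Finsupp.support_sum hs)
  by_cases hsub : A ⊆ g
  · rw [if_pos hsub] at hs
    simp at hs
  · rw [if_neg hsub] at hs
    have := Finsupp.support_single_subset hs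
    rw [Finset.mem_singleton] at this
    subst this
    exact h _ hg

lemma sbnd_notmem {A : Finset ℕ} {a : ℕ} (h : a ∉ A) :
    ∀ s ∈ (sbnd A).support, a ∉ s := by
  intro s hs
  unfold sbnd at hs
  obtain ⟨i, hi, hs⟩ := Finset.mem_biUnion.1 (Finsupp.support_finset_sum hs)
  have := Finsupp.support_single_subset hs
  rw [Finset.mem_singleton] at this
  subst this
  intro hmem
  exact h (Finset.mem_of_mem_erase hmem)

/-- `lk(a, C) = 0` if no simplex of `C` contains `a`. -/
lemma lkC_eq_zero {C : Chain} {a : ℕ} (h : ∀ g ∈ C.support, a ∉ g) :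
    lkC {a} C = 0 := by
  rw [lkC_sum_support]
  apply Finset.sum_eq_zero
  intro g hg
  rw [lkC_single, if_neg]
  rw [Finset.singleton_subset_iff]
  exact h g hg

/-- `Q(a, C) = C` if no simplex of `C` contains `a`. -/
lemma QC_eq_self {C : Chain} {a : ℕ} (h : ∀ g ∈ C.support, a ∉ g) :
    QC {a} C = C := by
  rw [QC_sum_support]
  calc ∑ g ∈ C.support, QC {a} (Finsupp.single g (C g))
      = ∑ g ∈ C.support, Finsupp.single g (C g) := by
        apply Finset.sum_congr rfl
        intro g hg
        rw [QC_single, if_neg]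
        rw [Finset.singleton_subset_iff]
        exact h g hg
    _ = C := (chain_eq_sum C).symm

/-- `lk(a, a ⋆ L) = L` if `a` avoids the vertices of `L`. -/
lemma lkC_join_self {L : Chain} {a : ℕ} (hL : ∀ s ∈ L.support, a ∉ s) :
    lkC {a} (joinC (Finsupp.single {a} 1) L) = L := by
  rw [joinC_single_left]
  have h1 : (L.sum fun B b => Finsupp.single ({a} ∪ B) b) =
      ∑ B ∈ L.support, Finsupp.single ({a} ∪ B) (L B) := rfl
  rw [h1, lkC_finset_sum]
  calc ∑ B ∈ L.support, lkC {a} (Finsupp.single ({a} ∪ B) (L B))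
      = ∑ B ∈ L.support, Finsupp.single B (L B) := by
        apply Finset.sum_congr rfl
        intro B hB
        rw [lkC_single, if_pos (by simp)]
        congr 1
        ext x
        simp only [Finset.mem_sdiff, Finset.mem_union, Finset.mem_singleton]
        constructor
        · rintro ⟨h1 | h1, h2⟩
          · exact absurd h1 h2
          · exact h1
        · intro hx
          exact ⟨Or.inr hx, fun hxa => hL B hB (hxa ▸ hx)⟩
    _ = L := (chain_eq_sum L).symm

/-- `Q(a, a ⋆ L) = 0`. -/
lemma QC_join_self (a : ℕ) (L : Chain) :
    QC {a} (joinC (Finsupp.single {a} 1) L) = 0 := by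
  rw [joinC_single_left]
  have h1 : (L.sum fun B b => Finsupp.single ({a} ∪ B) b) =
      ∑ B ∈ L.support, Finsupp.single ({a} ∪ B) (L B) := rfl
  rw [h1, QC_finset_sum]
  apply Finset.sum_eq_zero
  intro B hB
  rw [QC_single, if_pos (by simp)]

/-- The decomposition `K = A ⋆ lk(A,K) + Q(A,K)`. -/
lemma decompC (A : Finset ℕ) (K : Chain) :
    joinC (Finsupp.single A 1) (lkC A K) + QC A K = K := by
  rw [lkC_sum_support, joinC_single_finset_sum, QC_sum_support, ← Finset.sum_add_distrib]
  calc ∑ g ∈ K.support,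
        (joinC (Finsupp.single A 1) (lkC A (Finsupp.single g (K g))) +
          QC A (Finsupp.single g (K g)))
      = ∑ g ∈ K.support, Finsupp.single g (K g) := by
        apply Finset.sum_congr rfl
        intro g hg
        rw [lkC_single, QC_single]
        split
        · rename_i hsub
          rw [joinC_single_single, Finset.union_sdiff_of_subset hsub, add_zero]
        · rw [show joinC (Finsupp.single A 1) (0 : Chain) = 0 by
            rw [joinC_single_left]; simp [Finsupp.sum], zero_add]
    _ = K := (chain_eq_sum K).symm

/-- the weld `(A a)⁻¹` undoes the subdivision `(A a)`:
for the subdivision `K̂ = (A a)K` one has `lk(a,K̂) = ∂A ⋆ lk(A,K)`, and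
the weld `A ⋆ lk(A,K) + Q(a,K̂)` recovers `K`. -/
theorem weld_inverse_of_subdivision (K : Chain) (A : Finset ℕ) (a : ℕ)
    (hA : ∃ g ∈ K.support, A ⊆ g) (hA' : A.Nonempty)
    (ha : ∀ g ∈ K.support, a ∉ g) :
    lkC {a} (subdivC A a K) = joinC (sbnd A) (lkC A K) ∧
      weldC A a (lkC A K) (subdivC A a K) = K := by
  obtain ⟨g₀, hg₀, hAg₀⟩ := hA
  have haA : a ∉ A := fun h => ha g₀ hg₀ (hAg₀ h)
  have hLa : ∀ s ∈ (joinC (sbnd A) (lkC A K)).support, a ∉ s :=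
    joinC_notmem (sbnd_notmem haA) (lkC_notmem ha)
  have hQa : ∀ s ∈ (QC A K).support, a ∉ s := QC_notmem ha
  constructor
  · rw [subdivC, lkC_add, lkC_join_self hLa, lkC_eq_zero hQa, add_zero]
  · rw [weldC, subdivC, QC_add, QC_join_self, QC_eq_self hQa, zero_add]
    exact decompC A K
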